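/- Matrix-tree theorem: for an undirected graph G with Laplacian L, deleting the row and column corresponding to any fixed vertex v yields a matrix L_v whose determinant equals the number of spanning trees of G. -/

import Mathlib

/-!
Orient every edge of `G` and let `N` be the signed incidence matrix with the row of `v`
deleted, so that `L_v = N Nᵀ`. By Cauchy–Binet, `det L_v` is a sum of `det (N_S) ^ 2` over
the families `S` of `n - 1` edges. If `S` spans a disconnected graph, the indicator of a
component avoiding `v` lies in the left kernel of `N_S`. If it spans a connected graph, the
signed edge counts of walks to `v` form an integer right inverse of `N_S`, so
`det N_S = ±1`. A connected graph on `n` vertices with `n - 1` edges is a tree, so each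
spanning tree contributes `1` per enumeration of its edges.
-/

open Finset Matrix SimpleGraph
open scoped Nat

namespace Matrix

variable {m n R : Type*} [Fintype m] [DecidableEq m] [Fintype n] [CommRing R]

theorem det_mul_eq_sum_det_submatrix_mul_prod (A : Matrix m n R) (B : Matrix n m R) :
    det (A * B) = ∑ p : m → n, det (A.submatrix id p) * ∏ i, B (p i) i := by
  simp only [det_apply', mul_apply, prod_univ_sum, mul_sum, Fintype.piFinset_univ, sum_mul,
    submatrix_apply, id_eq, prod_mul_distrib]
  rw [sum_comm]
  refine sum_congr rfl fun p _ => sum_congr rfl fun σ _ => ?_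
  ring

/-- Cauchy–Binet in a form that needs no enumeration of each set of columns: every injective `p`
is counted once for each of its `(card m)!` reorderings. -/
theorem factorial_mul_det_mul (A : Matrix m n R) (B : Matrix n m R) :
    (Fintype.card m)! * det (A * B) =
      ∑ p : m → n, det (A.submatrix id p) * det (B.submatrix p id) := by
  have reindex (σ : Equiv.Perm m) : det (A * B) =
      ∑ p : m → n, Equiv.Perm.sign σ * det (A.submatrix id p) * ∏ i, B (p (σ i)) i := by
    rw [det_mul_eq_sum_det_submatrix_mul_prod]
    refine (Fintype.sum_equiv (σ.symm.arrowCongr (Equiv.refl n)) _ _ fun p => ?_).symm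
    change _ = det ((A.submatrix id p).submatrix id σ) * _
    rw [det_permute']
    rfl
  calc ((Fintype.card m)! : R) * det (A * B) = ∑ σ : Equiv.Perm m, det (A * B) := by
        rw [sum_const, card_univ, Fintype.card_perm, nsmul_eq_mul]
    _ = ∑ p : m → n, det (A.submatrix id p) *
          ∑ σ : Equiv.Perm m, Equiv.Perm.sign σ * ∏ i, B (p (σ i)) i := by
        rw [sum_congr rfl fun σ _ => reindex σ, sum_comm]
        simp only [mul_sum]
        exact sum_congr rfl fun p _ => sum_congr rfl fun σ _ => by ring
    _ = ∑ p : m → n, det (A.submatrix id p) * det (B.submatrix p id) := by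
        simp only [det_apply', submatrix_apply, id_eq]

end Matrix

section OrientedIncidence

variable {V : Type*} [DecidableEq V]

/-- The orientation `e.out` of each pair is an arbitrary choice; loops get the zero column. -/
noncomputable def orientedIncMatrix (V : Type*) [DecidableEq V] : Matrix V (Sym2 V) ℤ :=
  of fun w e => (if w = e.out.1 then 1 else 0) - (if w = e.out.2 then 1 else 0)

noncomputable def orientSign (a b : V) : ℤ := if s(a, b).out = (a, b) then 1 else -1

lemma orientSign_mul_self (a b : V) : orientSign a b * orientSign a b = 1 := by
  unfold orientSign
  split_ifs <;> norm_num

lemma orientedIncMatrix_apply_mk {a b : V} (hab : a ≠ b) (w : V) :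
    orientedIncMatrix V w s(a, b) =
      orientSign a b * ((if w = a then 1 else 0) - (if w = b then 1 else 0)) := by
  rcases hout : s(a, b).out with ⟨x, y⟩
  have hxy : s(x, y) = s(a, b) := by
    have := Quot.out_eq s(a, b)
    rwa [hout] at this
  rcases Sym2.eq_iff.1 hxy with ⟨rfl, rfl⟩ | ⟨rfl, rfl⟩
  · simp [orientedIncMatrix, orientSign, hout]
  · simp [orientedIncMatrix, orientSign, hout, hab]

lemma orientedIncMatrix_mul_self {e : Sym2 V} (he : ¬e.IsDiag) (w : V) :
    orientedIncMatrix V w e * orientedIncMatrix V w e = if w ∈ e then 1 else 0 := by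
  induction e using Sym2.ind with | _ a b => ?_
  have hab : a ≠ b := he
  rw [orientedIncMatrix_apply_mk hab, mul_mul_mul_comm, orientSign_mul_self, one_mul]
  by_cases ha : w = a <;> by_cases hb : w = b <;> simp_all

lemma orientedIncMatrix_mul_of_ne {e : Sym2 V} (he : ¬e.IsDiag) {x y : V} (hxy : x ≠ y) :
    orientedIncMatrix V x e * orientedIncMatrix V y e = if e = s(x, y) then -1 else 0 := by
  induction e using Sym2.ind with | _ a b => ?_
  have hab : a ≠ b := he
  rw [orientedIncMatrix_apply_mk hab, orientedIncMatrix_apply_mk hab, mul_mul_mul_comm,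
    orientSign_mul_self, one_mul]
  simp only [Sym2.eq_iff]
  split_ifs <;> grind

variable [Fintype V]

lemma sum_mul_orientedIncMatrix_apply_mk (f : V → ℤ) {a b : V} (hab : a ≠ b) :
    ∑ w, f w * orientedIncMatrix V w s(a, b) = orientSign a b * (f a - f b) := by
  simp only [orientedIncMatrix_apply_mk hab, mul_sub, mul_ite, mul_one, mul_zero,
    sum_sub_distrib, sum_ite_eq', mem_univ, if_true]
  ring

theorem SimpleGraph.lapMatrix_eq_mul_transpose (G : SimpleGraph V) [DecidableRel G.Adj] :
    G.lapMatrix ℤ = (orientedIncMatrix V).submatrix id ((↑) : G.edgeSet → Sym2 V) *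
      ((orientedIncMatrix V).submatrix id ((↑) : G.edgeSet → Sym2 V))ᵀ := by
  ext x y
  simp only [mul_apply, submatrix_apply, transpose_apply, id]
  rw [← Finset.sum_subtype G.edgeFinset (fun _ => mem_edgeFinset)
    (fun e => orientedIncMatrix V x e * orientedIncMatrix V y e)]
  rcases eq_or_ne x y with rfl | hxy
  · rw [sum_congr rfl fun e he => orientedIncMatrix_mul_self
      (G.not_isDiag_of_mem_edgeSet (mem_edgeFinset.1 he)) x, sum_boole,
      ← incidenceFinset_eq_filter, card_incidenceFinset_eq_degree]
    simp [lapMatrix, degMatrix]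
  · rw [sum_congr rfl fun e he => orientedIncMatrix_mul_of_ne
      (G.not_isDiag_of_mem_edgeSet (mem_edgeFinset.1 he)) hxy, sum_ite_eq']
    simp [lapMatrix, degMatrix, hxy, apply_ite]

lemma SimpleGraph.map_intCast_lapMatrix {R : Type*} [AddGroupWithOne R] (G : SimpleGraph V)
    [DecidableRel G.Adj] : (G.lapMatrix ℤ).map (Int.cast : ℤ → R) = G.lapMatrix R := by
  ext x y
  by_cases h : x = y <;> by_cases hadj : G.Adj x y <;> simp [lapMatrix, degMatrix, h, hadj]

end OrientedIncidence

namespace SimpleGraph.Walk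

variable {V : Type*} [DecidableEq V] {H : SimpleGraph V}

noncomputable def flow {a c : V} (q : H.Walk a c) (e : Sym2 V) : ℤ :=
  (q.darts.map fun d => if d.edge = e then orientSign d.fst d.snd else 0).sum

lemma flow_eq_zero_of_notMem_edges {a c : V} (q : H.Walk a c) {e : Sym2 V}
    (he : e ∉ q.edges) : q.flow e = 0 :=
  List.sum_eq_zero fun x hx => by
    obtain ⟨d, hd, rfl⟩ := List.mem_map.1 hx
    exact if_neg fun hde : d.edge = e => he (hde ▸ List.mem_map_of_mem hd)

lemma flow_cons {a b c : V} (h : H.Adj a b) (q : H.Walk b c) (e : Sym2 V) :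
    (cons h q).flow e = (if s(a, b) = e then orientSign a b else 0) + q.flow e := by
  simp only [flow, darts_cons, List.map_cons, Dart.edge_mk, List.sum_cons, add_left_inj]
  rfl

theorem sum_orientedIncMatrix_mul_flow [Fintype V] {a c : V} (q : H.Walk a c) (u : V) :
    ∑ e, orientedIncMatrix V u e * q.flow e =
      (if u = a then 1 else 0) - (if u = c then 1 else 0) := by
  induction q with
  | nil => simp [flow]
  | @cons a b c h q ih =>
    simp only [flow_cons, mul_add, sum_add_distrib, ih, mul_ite, mul_zero, sum_ite_eq,
      mem_univ, if_true]
    rw [orientedIncMatrix_apply_mk h.ne, mul_right_comm, orientSign_mul_self, one_mul]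
    ring

end SimpleGraph.Walk

section ReducedIncidence

variable {V : Type*} [Fintype V] [DecidableEq V] {H : SimpleGraph V} {v : V}
  {b : {w // w ≠ v} → Sym2 V}

theorem det_submatrix_orientedIncMatrix_eq_zero (hb : ∀ i, b i ∈ H.edgeSet)
    (hH : ¬H.Connected) : det ((orientedIncMatrix V).submatrix (↑) b) = 0 := by
  classical
  obtain ⟨u, hu⟩ : ∃ u, ¬H.Reachable u v := by
    by_contra! h
    exact hH ((connected_iff_exists_forall_reachable H).2 ⟨v, fun w => (h w).symm⟩)
  have huv : u ≠ v := fun h => hu (h ▸ Reachable.refl u)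
  let f : V → ℤ := fun w => if H.Reachable u w then 1 else 0
  rw [← exists_vecMul_eq_zero_iff]
  refine ⟨fun w => f w, fun h => by simpa [f] using congrFun h ⟨u, huv⟩, funext fun i => ?_⟩
  -- `f v = 0`, so the sum over the rows `w ≠ v` is the sum over all of `V`.
  have hsum := Fintype.sum_eq_add_sum_subtype_ne (fun w => f w * orientedIncMatrix V w (b i)) v
  simp only [f, if_neg hu, zero_mul, zero_add] at hsum
  simp only [vecMul, dotProduct, submatrix_apply, Pi.zero_apply, f, ← hsum]
  have hbi := hb i
  generalize b i = e at hbi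
  induction e using Sym2.ind with | _ a c => ?_
  rw [sum_mul_orientedIncMatrix_apply_mk _ hbi.ne]
  have : H.Reachable u a ↔ H.Reachable u c :=
    ⟨fun h => h.trans hbi.reachable, fun h => h.trans hbi.symm.reachable⟩
  simp [this]

theorem isUnit_det_submatrix_orientedIncMatrix (hb : Function.Injective b)
    (hbH : H.edgeSet ⊆ Set.range b) (hH : H.Connected) :
    IsUnit (det ((orientedIncMatrix V).submatrix (↑) b)) := by
  let walk (w : V) : H.Walk w v := (hH.preconnected w v).some
  refine isUnit_det_of_right_inverse (B := of fun i w => (walk w).flow (b i)) ?_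
  ext u w
  calc ∑ i, orientedIncMatrix V u (b i) * (walk w).flow (b i)
      = ∑ e, orientedIncMatrix V u e * (walk w).flow e :=
        Fintype.sum_of_injective b hb _ _ (fun e he => by
          rw [(walk w).flow_eq_zero_of_notMem_edges
            fun h => he (hbH ((walk w).edges_subset_edgeSet h)), mul_zero]) fun _ => rfl
    _ = (1 : Matrix {w // w ≠ v} {w // w ≠ v} ℤ) u w := by
        rw [Walk.sum_orientedIncMatrix_mul_flow, one_apply, if_neg u.2]
        simp [Subtype.ext_iff]

open Classical in
theorem det_submatrix_orientedIncMatrix_sq (hb : Function.Injective b)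
    (hbH : Set.range b = H.edgeSet) :
    det ((orientedIncMatrix V).submatrix (↑) b) ^ 2 = if H.Connected then 1 else 0 := by
  split_ifs with hH
  · exact Int.isUnit_sq (isUnit_det_submatrix_orientedIncMatrix hb hbH.ge hH)
  · rw [det_submatrix_orientedIncMatrix_eq_zero (fun i => hbH ▸ ⟨i, rfl⟩) hH, sq, mul_zero]

end ReducedIncidence

namespace SimpleGraph

variable {V ι : Type*} {G : SimpleGraph V}

lemma edgeSet_fromEdgeSet_range (p : ι → G.edgeSet) :
    (fromEdgeSet (Set.range fun i => (p i : Sym2 V))).edgeSet =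
      Set.range fun i => (p i : Sym2 V) :=
  (edgeSet_eq_iff _ _).2 ⟨rfl, Set.disjoint_right.2 fun _ hd ⟨i, hi⟩ =>
    G.not_isDiag_of_mem_edgeSet (hi ▸ (p i).2) hd⟩

noncomputable def injectiveEdgeFamilyEquiv {H : SimpleGraph V} (hHG : H ≤ G) :
    {p : ι → G.edgeSet //
      Function.Injective p ∧ fromEdgeSet (Set.range fun i => (p i : Sym2 V)) = H} ≃
      (ι ≃ H.edgeSet) where
  toFun p := (Equiv.ofInjective _ (Subtype.val_injective.comp p.2.1)).trans
    (Equiv.setCongr (p.2.2 ▸ edgeSet_fromEdgeSet_range p.1).symm)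
  invFun e := ⟨fun i => ⟨e i, edgeSet_mono hHG (e i).2⟩,
    fun i j h => e.injective (Subtype.ext (congrArg Subtype.val h :)),
    edgeSet_inj.1 <| (edgeSet_fromEdgeSet_range _).trans <| Set.ext fun x =>
      ⟨fun ⟨i, hi⟩ => hi ▸ (e i).2, fun hx => ⟨e.symm ⟨x, hx⟩, by simp⟩⟩⟩
  left_inv _ := rfl
  right_inv _ := Equiv.ext fun _ => rfl

open Classical in
theorem card_injective_connected_fromEdgeSet_range [Fintype V] [DecidableEq V]
    [DecidableRel G.Adj] [Fintype ι] [DecidableEq ι]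
    (hι : Fintype.card ι + 1 = Fintype.card V) :
    #{p : ι → G.edgeSet | Function.Injective p ∧
        (fromEdgeSet (Set.range fun i => (p i : Sym2 V))).Connected} =
      (Fintype.card ι)! * #{T : SimpleGraph V | T ≤ G ∧ T.IsTree} := by
  rw [card_eq_sum_card_fiberwise (f := fun p => fromEdgeSet (Set.range fun i => (p i : Sym2 V)))
    (t := {T : SimpleGraph V | T ≤ G ∧ T.IsTree}) ?maps, sum_const_nat ?fiber, mul_comm]
  case maps =>
    intro p hp
    simp only [coe_filter, mem_univ, true_and, Set.mem_ofPred_eq] at hp ⊢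
    refine ⟨(fromEdgeSet_le _).2 ?_, isTree_iff_connected_and_card.2 ⟨hp.2, ?_⟩⟩
    · rintro _ ⟨⟨i, rfl⟩, -⟩
      exact (p i).2
    · rw [edgeSet_fromEdgeSet_range, Nat.card_range_of_injective (f := fun i => (p i : Sym2 V))
        (Subtype.val_injective.comp hp.1), Nat.card_eq_fintype_card, Nat.card_eq_fintype_card, hι]
  case fiber =>
    intro T hT
    simp only [mem_filter, mem_univ, true_and] at hT
    have hfiber (p : ι → G.edgeSet) : (Function.Injective p ∧
        (fromEdgeSet (Set.range fun i => (p i : Sym2 V))).Connected) ∧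
        fromEdgeSet (Set.range fun i => (p i : Sym2 V)) = T ↔
        Function.Injective p ∧ fromEdgeSet (Set.range fun i => (p i : Sym2 V)) = T :=
      ⟨fun h => ⟨h.1.1, h.2⟩, fun h => ⟨⟨h.1, h.2 ▸ hT.2.connected⟩, h.2⟩⟩
    have hcard : Fintype.card ι = Fintype.card T.edgeSet := by
      have := hT.2.card_edgeFinset
      rw [edgeFinset_card] at this
      omega
    rw [filter_filter, filter_congr fun p _ => hfiber p, ← Fintype.card_subtype,
      Fintype.card_congr (injectiveEdgeFamilyEquiv hT.1),
      Fintype.card_equiv (Fintype.equivOfCardEq hcard)]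

end SimpleGraph

lemma Fintype.card_subtype_ne_add_one {α : Type*} [Fintype α] [DecidableEq α] (a : α) :
    Fintype.card {x // x ≠ a} + 1 = Fintype.card α := by
  rw [Fintype.card_subtype_compl, Fintype.card_subtype_eq]
  have := Fintype.card_pos_iff.2 ⟨a⟩
  omega

section MatrixTree

variable {V : Type*} [Fintype V] [DecidableEq V] {G : SimpleGraph V} {v : V}

open Classical in
theorem det_submatrix_orientedIncMatrix_edgeSet_sq (p : {w // w ≠ v} → G.edgeSet) :
    det (((orientedIncMatrix V).submatrix (↑) (↑) :
        Matrix {w // w ≠ v} G.edgeSet ℤ).submatrix id p) ^ 2 =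
      if Function.Injective p ∧ (fromEdgeSet (Set.range fun i => (p i : Sym2 V))).Connected
      then 1 else 0 := by
  by_cases hp : Function.Injective p
  · rw [show ((orientedIncMatrix V).submatrix (↑) (↑) :
          Matrix {w // w ≠ v} G.edgeSet ℤ).submatrix id p =
        (orientedIncMatrix V).submatrix (↑) fun i => (p i : Sym2 V) from rfl,
      det_submatrix_orientedIncMatrix_sq (fun i j h => hp (Subtype.ext h))
        (edgeSet_fromEdgeSet_range p).symm]
    simp [hp]
  · obtain ⟨i, j, hij, hne⟩ := Function.not_injective_iff.1 hp
    rw [det_zero_of_column_eq hne fun k => by simp only [submatrix_apply, hij]]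
    simp [hp]

variable (G v) [DecidableRel G.Adj]

theorem det_lapMatrix_submatrix_eq_card_isTree :
    det ((G.lapMatrix ℤ).submatrix ((↑) : {w // w ≠ v} → V) (↑)) =
      Nat.card {H : SimpleGraph V // H ≤ G ∧ H.IsTree} := by
  classical
  refine mul_left_cancel₀
    (Nat.cast_ne_zero.2 (Fintype.card {w : V // w ≠ v}).factorial_ne_zero) ?_
  have hL : (G.lapMatrix ℤ).submatrix ((↑) : {w // w ≠ v} → V) (↑) =
      (orientedIncMatrix V).submatrix ((↑) : {w // w ≠ v} → V)
          ((↑) : G.edgeSet → Sym2 V) *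
        ((orientedIncMatrix V).submatrix ((↑) : {w // w ≠ v} → V)
          ((↑) : G.edgeSet → Sym2 V))ᵀ := by
    rw [lapMatrix_eq_mul_transpose]
    rfl
  rw [hL, Matrix.factorial_mul_det_mul]
  simp only [← transpose_submatrix, det_transpose, ← sq,
    det_submatrix_orientedIncMatrix_edgeSet_sq, sum_boole,
    card_injective_connected_fromEdgeSet_range (Fintype.card_subtype_ne_add_one v),
    Nat.card_eq_fintype_card, Fintype.card_subtype]
  push_cast
  rfl

end MatrixTree

/-- Matrix-tree theorem: deleting the row and column of any fixed vertex `v` from the Laplacian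
yields a matrix whose determinant equals the number of spanning trees of `G`. -/
theorem det_lapMatrix_minor_eq_card_spanningTrees
    {V : Type*} [Fintype V] [DecidableEq V] (G : SimpleGraph V) [DecidableRel G.Adj]
    (v : V) :
    ((G.lapMatrix ℝ).submatrix (fun w : {w : V // w ≠ v} => (w : V))
        (fun w : {w : V // w ≠ v} => (w : V))).det =
      (Nat.card {H : SimpleGraph V // H ≤ G ∧ H.IsTree} : ℝ) := by
  rw [← G.map_intCast_lapMatrix, submatrix_map, ← Int.cast_det,
    det_lapMatrix_submatrix_eq_card_isTree, Int.cast_natCast]
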